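/- arXiv:2003.05296 — 6 statements merged into one kernel-verified Lean document; each statement's English description precedes it below -/
import Mathlib

section
/- Let p = 4k+1 be a prime and R a commutative ring of characteristic 2. For any a_i, b_i, c_i, a_j, b_j, c_j ∈ R, Q_p(a_i,b_i,c_i) · Q_p(a_j,b_j,c_j)^T = Q_p( a_i a_j , a_i b_j + b_i a_j + (k+1) b_i b_j + k (b_i c_j + c_i b_j) + k c_i c_j , a_i c_j + c_i a_j + k b_i b_j + k (b_i c_j + c_i b_j) + (k+1) c_i c_j ). -/
open Matrix
open scoped Classical

/-- The quadratic residue circulant matrix `Q_p(a,b,c)`: the `p × p` matrix over `R`,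
indexed by `ZMod p`, whose `(i,j)` entry is `a` if `i = j`, `b` if `j - i` is a
nonzero quadratic residue modulo `p`, and `c` otherwise. -/
noncomputable def Qmat (p : ℕ) {R : Type*} [CommRing R] (a b c : R) :
    Matrix (ZMod p) (ZMod p) R :=
  Matrix.of fun i j => if i = j then a else if IsSquare (j - i) then b else c

/-!
Write `S = Q_p(0,1,0)`, the adjacency matrix of the Paley graph, and `J` for the all-ones
matrix, so that `Q_p(a,b,c) = (a - c) I + (b - c) S + c J`. As `-1` is a square modulo
`p = 4k + 1`, every `Q_p(a,b,c)` is symmetric. The Jacobi sum `∑ χ(y) χ(t - y) = -χ(-1)` of the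
quadratic character `χ` determines the number of ways to write `t` as a sum of two nonzero
squares, which is the strong regularity `S² + S = k (I + J)` of the Paley graph. With
`S J = J S = 2k J` and `J² = p J` the product lies in the span of `I`, `S`, `J`, and reducing its
coefficients modulo `2` gives the claim.
-/

open Finset

section QuadraticChar

variable {F : Type*} [Field F] [Fintype F] {k : ℕ}

lemma ringChar_ne_two_of_card_eq (hF : Fintype.card F = 4 * k + 1) : ringChar F ≠ 2 := by
  rw [Ne, FiniteField.even_card_iff_char_two, hF]
  omega

variable [DecidableEq F]

lemma quadraticChar_sum_mul_sub (hF : ringChar F ≠ 2) {t : F} (ht : t ≠ 0) :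
    ∑ y, quadraticChar F y * quadraticChar F (t - y) = -quadraticChar F (-1) := by
  have hJ := jacobiSum_nontrivial_inv (quadraticChar_ne_one hF)
  rw [quadraticChar_isQuadratic F |>.inv, jacobiSum] at hJ
  rw [← hJ, ← Equiv.sum_comp (Equiv.mulLeft₀ t ht)]
  refine sum_congr rfl fun x _ => ?_
  change quadraticChar F (t * x) * quadraticChar F (t - t * x) = _
  rw [show t - t * x = t * (1 - x) by ring, map_mul, map_mul,
    mul_mul_mul_comm, ← sq, quadraticChar_sq_one ht, one_mul]

lemma one_add_quadraticChar_eq (y : F) :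
    1 + quadraticChar F y = 2 * (if quadraticChar F y = 1 then 1 else 0) +
      if y = 0 then 1 else 0 := by
  by_cases hy : y = 0
  · simp [hy]
  rcases quadraticChar_dichotomy hy with h | h <;> simp [h, hy]

lemma two_mul_card_quadraticChar_eq_one_add_one (hF : ringChar F ≠ 2) :
    2 * #{y | quadraticChar F y = 1} + 1 = Fintype.card F := by
  have h := Fintype.sum_congr _ _ (one_add_quadraticChar_eq (F := F))
  simp only [sum_add_distrib, ← mul_sum, sum_boole, quadraticChar_sum_zero hF, filter_eq',
    mem_univ, if_true, card_singleton, sum_const, card_univ, nsmul_eq_mul, mul_one, add_zero] at h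
  exact_mod_cast h.symm

lemma one_add_quadraticChar_mul_one_add_quadraticChar_sub {t : F} (ht : t ≠ 0) (y : F) :
    (1 + quadraticChar F y) * (1 + quadraticChar F (t - y)) =
      4 * (if quadraticChar F y = 1 ∧ quadraticChar F (t - y) = 1 then 1 else 0) +
      ((if y = 0 then 1 + quadraticChar F t else 0) +
        if y = t then 1 + quadraticChar F t else 0) := by
  by_cases h0 : y = 0
  · simp [h0, ht.symm]
  by_cases ht' : y = t
  · simp [ht', ht]
  have h1 : t - y ≠ 0 := sub_ne_zero.2 (Ne.symm ht')
  rcases quadraticChar_dichotomy h0 with h | h <;>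
    rcases quadraticChar_dichotomy h1 with h' | h' <;> simp [h, h', h0, ht']

lemma four_mul_card_quadraticChar_eq_one_and (hF : ringChar F ≠ 2) {t : F} (ht : t ≠ 0) :
    4 * (#{y | quadraticChar F y = 1 ∧ quadraticChar F (t - y) = 1} : ℤ) +
      2 * (1 + quadraticChar F t) + quadraticChar F (-1) = Fintype.card F := by
  have h := Fintype.sum_congr _ _ (one_add_quadraticChar_mul_one_add_quadraticChar_sub ht)
  have hshift : ∑ y : F, quadraticChar F (t - y) = 0 :=
    (Equiv.sum_comp (Equiv.subLeft t) (quadraticChar F ·)).trans (quadraticChar_sum_zero hF)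
  simp only [add_mul, mul_add, one_mul, mul_one, sum_add_distrib, ← mul_sum, sum_boole,
    quadraticChar_sum_zero hF, hshift, quadraticChar_sum_mul_sub hF ht, sum_ite_eq',
    mem_univ, if_true, sum_const, card_univ, nsmul_eq_mul] at h
  linarith

lemma quadraticChar_neg_one_of_card_eq (hF : Fintype.card F = 4 * k + 1) :
    quadraticChar F (-1) = 1 :=
  (quadraticChar_one_iff_isSquare (neg_ne_zero.2 one_ne_zero)).2
    (FiniteField.isSquare_neg_one_iff.2 (by omega))

lemma card_quadraticChar_eq_one_of_card_eq (hF : Fintype.card F = 4 * k + 1) :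
    #{y : F | quadraticChar F y = 1} = 2 * k := by
  have := two_mul_card_quadraticChar_eq_one_add_one (ringChar_ne_two_of_card_eq hF)
  omega

lemma card_quadraticChar_eq_one_and_add (hF : Fintype.card F = 4 * k + 1) (t : F) :
    #{y | quadraticChar F y = 1 ∧ quadraticChar F (t - y) = 1} +
      (if quadraticChar F t = 1 then 1 else 0) = if t = 0 then 2 * k else k := by
  rcases eq_or_ne t 0 with rfl | ht
  · have hneg (y : F) : quadraticChar F (0 - y) = quadraticChar F y := by
      rw [zero_sub, ← neg_one_mul, map_mul, quadraticChar_neg_one_of_card_eq hF, one_mul]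
    simp only [hneg, and_self, card_quadraticChar_eq_one_of_card_eq hF, quadraticChar_zero]
    simp
  have h := four_mul_card_quadraticChar_eq_one_and (ringChar_ne_two_of_card_eq hF) ht
  rw [quadraticChar_neg_one_of_card_eq hF, hF] at h
  rw [if_neg ht]
  rcases quadraticChar_dichotomy ht with h1 | h1 <;> rw [h1] at h ⊢
  · rw [if_pos rfl]; omega
  · rw [if_neg (by decide)]; omega

end QuadraticChar

section Qmat

variable {p : ℕ} {R : Type*} [CommRing R]

lemma Qmat_eq_smul_add (a b c : R) :
    Qmat p a b c = (a - c) • 1 + (b - c) • Qmat p 0 1 0 + c • of fun _ _ => 1 := by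
  ext i j
  simp only [Qmat, Matrix.add_apply, Matrix.smul_apply, one_apply, of_apply, smul_eq_mul]
  split_ifs <;> ring

lemma Qmat_transpose (h : IsSquare (-1 : ZMod p)) (a b c : R) :
    (Qmat p a b c)ᵀ = Qmat p a b c := by
  have hsq (x : ZMod p) : IsSquare (-x) ↔ IsSquare x :=
    ⟨fun hx => by simpa using h.mul hx, fun hx => by simpa using h.mul hx⟩
  ext i j
  simp only [Qmat, transpose_apply, of_apply, eq_comm (a := j), ← neg_sub i j, hsq]

lemma ones_mul_ones (n : Type*) [Fintype n] :
    (of fun _ _ => (1 : R) : Matrix n n R) * of (fun _ _ => 1) =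
      (Fintype.card n : R) • of fun _ _ => 1 := by
  ext i j
  simp [mul_apply]

variable [Fact p.Prime] {k : ℕ}

lemma Qmat_zero_one_zero_apply (i j : ZMod p) :
    Qmat p (0 : R) 1 0 i j = if quadraticChar (ZMod p) (j - i) = 1 then 1 else 0 := by
  by_cases hij : i = j
  · simp [Qmat, hij]
  · have hne : j - i ≠ 0 := sub_ne_zero.2 (Ne.symm hij)
    simp only [Qmat, of_apply, if_neg hij, quadraticChar_one_iff_isSquare hne]
    congr

lemma Qmat_zero_one_zero_mul_ones (hpk : p = 4 * k + 1) :
    Qmat p (0 : R) 1 0 * of (fun _ _ => 1) = (2 * k : R) • of fun _ _ => 1 := by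
  ext i j
  have hF : Fintype.card (ZMod p) = 4 * k + 1 := by rw [ZMod.card, hpk]
  simp only [mul_apply, Qmat_zero_one_zero_apply, of_apply, mul_one, Matrix.smul_apply,
    smul_eq_mul]
  refine (Equiv.sum_comp (Equiv.subRight i) fun y =>
    if quadraticChar (ZMod p) y = 1 then (1 : R) else 0).trans ?_
  rw [sum_boole, card_quadraticChar_eq_one_of_card_eq hF]
  push_cast
  ring

lemma ones_mul_Qmat_zero_one_zero (hpk : p = 4 * k + 1) :
    of (fun _ _ => 1) * Qmat p (0 : R) 1 0 = (2 * k : R) • of fun _ _ => 1 := by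
  ext i j
  have hF : Fintype.card (ZMod p) = 4 * k + 1 := by rw [ZMod.card, hpk]
  simp only [mul_apply, Qmat_zero_one_zero_apply, of_apply, one_mul, Matrix.smul_apply,
    smul_eq_mul]
  refine (Equiv.sum_comp (Equiv.subLeft j) fun y =>
    if quadraticChar (ZMod p) y = 1 then (1 : R) else 0).trans ?_
  rw [sum_boole, card_quadraticChar_eq_one_of_card_eq hF]
  push_cast
  ring

lemma Qmat_zero_one_zero_mul_self (hpk : p = 4 * k + 1) :
    Qmat p (0 : R) 1 0 * Qmat p 0 1 0 + Qmat p 0 1 0 = (k : R) • (1 + of fun _ _ => 1) := by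
  ext i j
  have hF : Fintype.card (ZMod p) = 4 * k + 1 := by rw [ZMod.card, hpk]
  have h : ∑ y, (if quadraticChar (ZMod p) y = 1 ∧ quadraticChar (ZMod p) (j - i - y) = 1
      then (1 : R) else 0) + (if quadraticChar (ZMod p) (j - i) = 1 then 1 else 0) =
      if j - i = 0 then 2 * (k : R) else k := by
    have h := congrArg (Nat.cast : ℕ → R) (card_quadraticChar_eq_one_and_add hF (j - i))
    push_cast [Nat.cast_ite] at h
    rwa [sum_boole]
  rw [← Equiv.sum_comp (Equiv.subRight i)] at h
  simp only [Equiv.subRight_apply, sub_sub_sub_cancel_right] at h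
  simp only [Matrix.add_apply, mul_apply, Qmat_zero_one_zero_apply, Matrix.smul_apply, one_apply,
    of_apply, smul_eq_mul, ite_zero_mul_ite_zero, mul_one, h, sub_eq_zero, eq_comm (a := j)]
  split_ifs <;> ring

end Qmat

theorem stmt0 {R : Type*} [CommRing R] [CharP R 2] (p k : ℕ) [Fact (Nat.Prime p)]
    (hpk : p = 4 * k + 1) (ai bi ci aj bj cj : R) :
    Qmat p ai bi ci * (Qmat p aj bj cj)ᵀ =
      Qmat p (ai * aj)
        (ai * bj + bi * aj + ((k : R) + 1) * (bi * bj) + (k : R) * (bi * cj + ci * bj) +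
          (k : R) * (ci * cj))
        (ai * cj + ci * aj + (k : R) * (bi * bj) + (k : R) * (bi * cj + ci * bj) +
          ((k : R) + 1) * (ci * cj)) := by
  have hneg : IsSquare (-1 : ZMod p) := ZMod.exists_sq_eq_neg_one_iff.2 (by omega)
  have hSS := eq_sub_of_add_eq (Qmat_zero_one_zero_mul_self (R := R) hpk)
  have hJJ := ones_mul_ones (R := R) (ZMod p)
  have hpR : (Fintype.card (ZMod p) : R) = 4 * k + 1 := by rw [ZMod.card, hpk]; push_cast; ring
  rw [Qmat_transpose hneg, Qmat_eq_smul_add ai, Qmat_eq_smul_add aj, Qmat_eq_smul_add (ai * aj)]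
  simp only [add_mul, mul_add, smul_mul_smul, one_mul, mul_one, hSS, hJJ, hpR,
    Qmat_zero_one_zero_mul_ones hpk, ones_mul_Qmat_zero_one_zero hpk]
  match_scalars <;> grind
end

section
/- Let p = 4k+1 be a prime and R a commutative ring of characteristic 2, and set Q = Q_p(0,1,0) and N = Q_p(0,0,1). Then Q^T = Q, N^T = N, Q·Q^T = (k+1)·Q + k·N, Q·N^T = N·Q^T = k·(Q + N), and N·N^T = k·Q + (k+1)·N. -/
open Matrix
open scoped Classical

section Aux
open Finset


variable {p : ℕ} [Fact (Nat.Prime p)]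

local notation "χ" => quadraticChar (ZMod p)

lemma hshift (f : ZMod p → ℤ) (d : ZMod p) : ∑ x : ZMod p, f (x - d) = ∑ x : ZMod p, f x :=
  Equiv.sum_comp (Equiv.subRight d) f

lemma hT3 (hp2 : ringChar (ZMod p) ≠ 2) (d : ZMod p) (hd : d ≠ 0) :
    ∑ x : ZMod p, χ x * χ (x - d) = -1 := by
  have hinj : Function.Bijective (fun x : ZMod p => 1 - d * x⁻¹) := by
    refine Finite.injective_iff_bijective.mp fun x y h => ?_
    simp only [sub_right_injective.eq_iff] at h
    exact inv_injective (mul_left_cancel₀ hd h)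
  calc ∑ x : ZMod p, χ x * χ (x - d)
      = ∑ x ∈ Finset.univ.erase 0, χ x * χ (x - d) := by
        rw [Finset.sum_erase _ (by simp)]
    _ = ∑ x ∈ Finset.univ.erase 0, χ (1 - d * x⁻¹) := by
        refine Finset.sum_congr rfl fun x hx => ?_
        have hx0 : x ≠ 0 := (Finset.mem_erase.mp hx).1
        have hxd : x - d = x * (1 - d * x⁻¹) := by field_simp
        rw [hxd, _root_.map_mul, ← mul_assoc, ← sq, quadraticChar_sq_one hx0, one_mul]
    _ = (∑ x : ZMod p, χ (1 - d * x⁻¹)) - χ (1 - d * (0 : ZMod p)⁻¹) :=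
        Finset.sum_erase_eq_sub (Finset.mem_univ 0)
    _ = -1 := by
        rw [Function.Bijective.sum_comp hinj (χ ·), quadraticChar_sum_zero hp2]
        simp

lemma hT1 (hp2 : ringChar (ZMod p) ≠ 2) (d : ZMod p) :
    ∑ x : ZMod p, χ x ^ 2 * χ (x - d) = -χ (-d) := by
  calc ∑ x : ZMod p, χ x ^ 2 * χ (x - d)
      = ∑ x ∈ Finset.univ.erase 0, χ x ^ 2 * χ (x - d) := by
        rw [Finset.sum_erase _ (by simp)]
    _ = ∑ x ∈ Finset.univ.erase 0, χ (x - d) := by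
        refine Finset.sum_congr rfl fun x hx => ?_
        rw [quadraticChar_sq_one (Finset.mem_erase.mp hx).1, one_mul]
    _ = (∑ x : ZMod p, χ (x - d)) - χ (0 - d) :=
        Finset.sum_erase_eq_sub (Finset.mem_univ 0)
    _ = -χ (-d) := by
        rw [hshift (χ ·) d, quadraticChar_sum_zero hp2, zero_sub, zero_sub]

lemma hT2 (hp2 : ringChar (ZMod p) ≠ 2) (d : ZMod p) :
    ∑ x : ZMod p, χ x * χ (x - d) ^ 2 = -χ d := by
  calc ∑ x : ZMod p, χ x * χ (x - d) ^ 2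
      = ∑ x ∈ Finset.univ.erase d, χ x * χ (x - d) ^ 2 := by
        rw [Finset.sum_erase _ (by simp)]
    _ = ∑ x ∈ Finset.univ.erase d, χ x := by
        refine Finset.sum_congr rfl fun x hx => ?_
        rw [quadraticChar_sq_one (sub_ne_zero.mpr (Finset.mem_erase.mp hx).1), mul_one]
    _ = (∑ x : ZMod p, χ x) - χ d := Finset.sum_erase_eq_sub (Finset.mem_univ d)
    _ = -χ d := by rw [quadraticChar_sum_zero hp2, zero_sub]

lemma hTd : ∑ x : ZMod p, χ x ^ 2 = (p : ℤ) - 1 := by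
  calc ∑ x : ZMod p, χ x ^ 2
      = ∑ x ∈ Finset.univ.erase 0, χ x ^ 2 := by
        rw [Finset.sum_erase _ (by simp)]
    _ = ∑ x ∈ Finset.univ.erase 0, 1 := Finset.sum_congr rfl fun x hx =>
        quadraticChar_sq_one (Finset.mem_erase.mp hx).1
    _ = (p : ℤ) - 1 := by
        rw [Finset.sum_const, Finset.card_erase_of_mem (Finset.mem_univ 0),
          Finset.card_univ, ZMod.card]
        have : 2 ≤ p := (Fact.out : p.Prime).two_le
        simp only [nsmul_eq_mul, mul_one]
        omega

lemma hT0 (d : ZMod p) (hd : d ≠ 0) :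
    ∑ x : ZMod p, χ x ^ 2 * χ (x - d) ^ 2 = (p : ℤ) - 2 := by
  calc ∑ x : ZMod p, χ x ^ 2 * χ (x - d) ^ 2
      = ∑ x ∈ (Finset.univ.erase 0).erase d, χ x ^ 2 * χ (x - d) ^ 2 := by
        rw [Finset.sum_erase _ (by simp), Finset.sum_erase _ (by simp)]
    _ = ∑ x ∈ (Finset.univ.erase 0).erase d, 1 := by
        refine Finset.sum_congr rfl fun x hx => ?_
        obtain ⟨hxd, hx0⟩ := Finset.mem_erase.mp hx
        rw [quadraticChar_sq_one (Finset.mem_erase.mp hx0).1,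
          quadraticChar_sq_one (sub_ne_zero.mpr hxd), one_mul]
    _ = (p : ℤ) - 2 := by
        rw [Finset.sum_const, Finset.card_erase_of_mem
          (Finset.mem_erase.mpr ⟨hd, Finset.mem_univ d⟩),
          Finset.card_erase_of_mem (Finset.mem_univ 0), Finset.card_univ, ZMod.card]
        have h2 : 2 ≤ p := (Fact.out : p.Prime).two_le
        simp only [nsmul_eq_mul, mul_one]
        omega

lemma key (hp2 : ringChar (ZMod p) ≠ 2) (ε δ : ℤ) (d : ZMod p) (hd : d ≠ 0) :
    ∑ x : ZMod p, (χ x ^ 2 + ε * χ x) * (χ (x - d) ^ 2 + δ * χ (x - d))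
      = (p : ℤ) - 2 - δ * χ (-d) - ε * χ d - ε * δ := by
  have expand : ∀ x : ZMod p, (χ x ^ 2 + ε * χ x) * (χ (x - d) ^ 2 + δ * χ (x - d)) =
      χ x ^ 2 * χ (x - d) ^ 2 + δ * (χ x ^ 2 * χ (x - d)) + ε * (χ x * χ (x - d) ^ 2)
        + (ε * δ) * (χ x * χ (x - d)) := fun x => by ring
  simp_rw [expand]
  rw [Finset.sum_add_distrib, Finset.sum_add_distrib, Finset.sum_add_distrib,
    ← Finset.mul_sum, ← Finset.mul_sum, ← Finset.mul_sum,
    hT0 d hd, hT1 hp2 d, hT2 hp2 d, hT3 hp2 d hd]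
  ring

lemma keyd (hp2 : ringChar (ZMod p) ≠ 2) (ε δ : ℤ) :
    ∑ x : ZMod p, (χ x ^ 2 + ε * χ x) * (χ (x - 0) ^ 2 + δ * χ (x - 0))
      = (1 + ε * δ) * ((p : ℤ) - 1) := by
  have idem : ∀ x : ZMod p, χ x ^ 2 * χ x ^ 2 = χ x ^ 2 := by
    intro x
    by_cases hx : x = 0
    · simp [hx]
    · rw [quadraticChar_sq_one hx, mul_one]
  have h3 : ∑ x : ZMod p, χ x ^ 2 * χ x = 0 := by simpa using hT1 hp2 (0 : ZMod p)
  have h4 : ∑ x : ZMod p, χ x ^ 2 * χ x ^ 2 = (p : ℤ) - 1 := by simp_rw [idem]; exact hTd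
  have expand : ∀ x : ZMod p, (χ x ^ 2 + ε * χ x) * (χ (x - 0) ^ 2 + δ * χ (x - 0)) =
      χ x ^ 2 * χ x ^ 2 + (ε + δ) * (χ x ^ 2 * χ x) + (ε * δ) * χ x ^ 2 := fun x => by
    rw [sub_zero]; ring
  simp_rw [expand]
  rw [Finset.sum_add_distrib, Finset.sum_add_distrib, ← Finset.mul_sum, ← Finset.mul_sum,
    h3, h4, hTd]
  ring

lemma entry_gen (ε δ : ℤ) (A B : Matrix (ZMod p) (ZMod p) ℤ)
    (hA : ∀ i m, 2 * A i m = χ (m - i) ^ 2 + ε * χ (m - i))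
    (hB : ∀ i m, 2 * B i m = χ (m - i) ^ 2 + δ * χ (m - i))
    (i j : ZMod p) :
    4 * (A * Bᵀ) i j =
      ∑ x : ZMod p, (χ x ^ 2 + ε * χ x) * (χ (x - (j - i)) ^ 2 + δ * χ (x - (j - i))) := by
  rw [mul_apply, Finset.mul_sum]
  have step : ∀ m : ZMod p, 4 * (A i m * Bᵀ m j) =
      (χ (m - i) ^ 2 + ε * χ (m - i)) *
        (χ ((m - i) - (j - i)) ^ 2 + δ * χ ((m - i) - (j - i))) := by
    intro m
    have h : (m - i) - (j - i) = m - j := by ring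
    rw [h, transpose_apply, show (4 : ℤ) * (A i m * B j m) = (2 * A i m) * (2 * B j m) by ring,
      hA i m, hB j m]
  simp_rw [step]
  exact hshift (fun y => (χ y ^ 2 + ε * χ y) * (χ (y - (j - i)) ^ 2 + δ * χ (y - (j - i)))) i

lemma twoQ (i m : ZMod p) :
    2 * Qmat p (0 : ℤ) 1 0 i m = χ (m - i) ^ 2 + χ (m - i) := by
  simp only [Qmat, Matrix.of_apply]
  by_cases hij : i = m
  · simp [hij]
  · have h0 : m - i ≠ 0 := sub_ne_zero.mpr (Ne.symm hij)
    rw [if_neg hij, quadraticChar_sq_one h0]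
    by_cases hs : IsSquare (m - i)
    · rw [if_pos hs, (quadraticChar_one_iff_isSquare h0).mpr hs]; ring
    · rw [if_neg hs, quadraticChar_neg_one_iff_not_isSquare.mpr hs]; ring

lemma twoN (i m : ZMod p) :
    2 * Qmat p (0 : ℤ) 0 1 i m = χ (m - i) ^ 2 + (-1) * χ (m - i) := by
  simp only [Qmat, Matrix.of_apply]
  by_cases hij : i = m
  · simp [hij]
  · have h0 : m - i ≠ 0 := sub_ne_zero.mpr (Ne.symm hij)
    rw [if_neg hij, quadraticChar_sq_one h0]
    by_cases hs : IsSquare (m - i)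
    · rw [if_pos hs, (quadraticChar_one_iff_isSquare h0).mpr hs]; ring
    · rw [if_neg hs, quadraticChar_neg_one_iff_not_isSquare.mpr hs]; ring

lemma chi_neg (hp1 : p % 4 = 1) (d : ZMod p) : χ (-d) = χ d := by
  have h1 : IsSquare (-1 : ZMod p) := (ZMod.exists_sq_eq_neg_one_iff).mpr (by omega)
  have hn0 : (-1 : ZMod p) ≠ 0 := neg_ne_zero.mpr one_ne_zero
  rw [← neg_one_mul, _root_.map_mul, (quadraticChar_one_iff_isSquare hn0).mpr h1, one_mul]

lemma entryQQ (hp1 : p % 4 = 1) (hp2 : ringChar (ZMod p) ≠ 2) (k : ℕ) (hpk : p = 4 * k + 1)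
    (i j : ZMod p) :
    (Qmat p (0 : ℤ) 1 0 * (Qmat p (0 : ℤ) 1 0)ᵀ) i j =
      if i = j then 2 * (k : ℤ) else if IsSquare (j - i) then (k : ℤ) - 1 else (k : ℤ) := by
  refine mul_left_cancel₀ (by norm_num : (4 : ℤ) ≠ 0) ?_
  rw [entry_gen 1 1 _ _ (fun i m => by rw [twoQ]; ring) (fun i m => by rw [twoQ]; ring) i j]
  by_cases hij : i = j
  · subst hij
    simp only [sub_self]
    rw [keyd hp2 1 1, if_true]
    push_cast [hpk]; ring
  · have hd : j - i ≠ 0 := sub_ne_zero.mpr (Ne.symm hij)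
    rw [key hp2 1 1 _ hd, chi_neg hp1, if_neg hij]
    by_cases hs : IsSquare (j - i)
    · rw [if_pos hs, (quadraticChar_one_iff_isSquare hd).mpr hs]; push_cast [hpk]; ring
    · rw [if_neg hs, quadraticChar_neg_one_iff_not_isSquare.mpr hs]; push_cast [hpk]; ring

lemma entryQN (hp1 : p % 4 = 1) (hp2 : ringChar (ZMod p) ≠ 2) (k : ℕ) (hpk : p = 4 * k + 1)
    (i j : ZMod p) :
    (Qmat p (0 : ℤ) 1 0 * (Qmat p (0 : ℤ) 0 1)ᵀ) i j =
      if i = j then 0 else (k : ℤ) := by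
  refine mul_left_cancel₀ (by norm_num : (4 : ℤ) ≠ 0) ?_
  rw [entry_gen 1 (-1) _ _ (fun i m => by rw [twoQ]; ring) (fun i m => by rw [twoN]) i j]
  by_cases hij : i = j
  · subst hij
    simp only [sub_self]
    rw [keyd hp2 1 (-1), if_true]
    push_cast [hpk]; ring
  · have hd : j - i ≠ 0 := sub_ne_zero.mpr (Ne.symm hij)
    rw [key hp2 1 (-1) _ hd, chi_neg hp1, if_neg hij]
    push_cast [hpk]; ring

lemma entryNQ (hp1 : p % 4 = 1) (hp2 : ringChar (ZMod p) ≠ 2) (k : ℕ) (hpk : p = 4 * k + 1)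
    (i j : ZMod p) :
    (Qmat p (0 : ℤ) 0 1 * (Qmat p (0 : ℤ) 1 0)ᵀ) i j =
      if i = j then 0 else (k : ℤ) := by
  refine mul_left_cancel₀ (by norm_num : (4 : ℤ) ≠ 0) ?_
  rw [entry_gen (-1) 1 _ _ (fun i m => by rw [twoN]) (fun i m => by rw [twoQ]; ring) i j]
  by_cases hij : i = j
  · subst hij
    simp only [sub_self]
    rw [keyd hp2 (-1) 1, if_true]
    push_cast [hpk]; ring
  · have hd : j - i ≠ 0 := sub_ne_zero.mpr (Ne.symm hij)
    rw [key hp2 (-1) 1 _ hd, chi_neg hp1, if_neg hij]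
    push_cast [hpk]; ring

lemma entryNN (hp1 : p % 4 = 1) (hp2 : ringChar (ZMod p) ≠ 2) (k : ℕ) (hpk : p = 4 * k + 1)
    (i j : ZMod p) :
    (Qmat p (0 : ℤ) 0 1 * (Qmat p (0 : ℤ) 0 1)ᵀ) i j =
      if i = j then 2 * (k : ℤ) else if IsSquare (j - i) then (k : ℤ) else (k : ℤ) - 1 := by
  refine mul_left_cancel₀ (by norm_num : (4 : ℤ) ≠ 0) ?_
  rw [entry_gen (-1) (-1) _ _ (fun i m => by rw [twoN]) (fun i m => by rw [twoN]) i j]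
  by_cases hij : i = j
  · subst hij
    simp only [sub_self]
    rw [keyd hp2 (-1) (-1), if_true]
    push_cast [hpk]; ring
  · have hd : j - i ≠ 0 := sub_ne_zero.mpr (Ne.symm hij)
    rw [key hp2 (-1) (-1) _ hd, chi_neg hp1, if_neg hij]
    by_cases hs : IsSquare (j - i)
    · rw [if_pos hs, (quadraticChar_one_iff_isSquare hd).mpr hs]; push_cast [hpk]; ring
    · rw [if_neg hs, quadraticChar_neg_one_iff_not_isSquare.mpr hs]; push_cast [hpk]; ring


end Aux

theorem stmt2 {R : Type*} [CommRing R] [CharP R 2] (p k : ℕ) [Fact (Nat.Prime p)]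
    (hpk : p = 4 * k + 1) :
    (Qmat p (0 : R) 1 0)ᵀ = Qmat p (0 : R) 1 0 ∧
    (Qmat p (0 : R) 0 1)ᵀ = Qmat p (0 : R) 0 1 ∧
    Qmat p (0 : R) 1 0 * (Qmat p (0 : R) 1 0)ᵀ =
      ((k : R) + 1) • Qmat p (0 : R) 1 0 + (k : R) • Qmat p (0 : R) 0 1 ∧
    Qmat p (0 : R) 1 0 * (Qmat p (0 : R) 0 1)ᵀ =
      (k : R) • (Qmat p (0 : R) 1 0 + Qmat p (0 : R) 0 1) ∧
    Qmat p (0 : R) 0 1 * (Qmat p (0 : R) 1 0)ᵀ =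
      (k : R) • (Qmat p (0 : R) 1 0 + Qmat p (0 : R) 0 1) ∧
    Qmat p (0 : R) 0 1 * (Qmat p (0 : R) 0 1)ᵀ =
      (k : R) • Qmat p (0 : R) 1 0 + ((k : R) + 1) • Qmat p (0 : R) 0 1 := by
  have hp1 : p % 4 = 1 := by omega
  have hp2 : ringChar (ZMod p) ≠ 2 := by rw [ZMod.ringChar_zmod_n]; omega
  have h2 : (2 : R) = 0 := by exact_mod_cast CharP.cast_eq_zero R 2
  have h1sq : IsSquare (-1 : ZMod p) := ZMod.exists_sq_eq_neg_one_iff.mpr (by omega)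
  have hsymm : ∀ x : ZMod p, IsSquare (-x) ↔ IsSquare x := by
    intro x
    constructor
    · intro h
      have := h1sq.mul h
      rwa [neg_one_mul, neg_neg] at this
    · intro h
      have := h1sq.mul h
      rwa [neg_one_mul] at this
  have htr : ∀ b c : R, (Qmat p (0 : R) b c)ᵀ = Qmat p (0 : R) b c := by
    intro b c
    ext i j
    show Qmat p (0 : R) b c j i = Qmat p (0 : R) b c i j
    simp only [Qmat, Matrix.of_apply]
    by_cases hij : i = j
    · simp [hij]
    · rw [if_neg (Ne.symm hij), if_neg hij]
      have hiff : IsSquare (i - j) ↔ IsSquare (j - i) := by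
        rw [show i - j = -(j - i) by ring, hsymm]
      simp only [hiff]
      split_ifs <;> rfl
  have castQ : ∀ (b c : ℤ) (i m : ZMod p),
      ((Qmat p (0 : ℤ) b c i m : ℤ) : R) = Qmat p (0 : R) (b : R) (c : R) i m := by
    intro b c i m
    simp only [Qmat, Matrix.of_apply, apply_ite (fun z : ℤ => (z : R))]
    norm_num
  have prodcast : ∀ (b₁ c₁ b₂ c₂ : ℤ) (i j : ZMod p),
      (Qmat p (0 : R) (b₁ : R) (c₁ : R) * (Qmat p (0 : R) (b₂ : R) (c₂ : R))ᵀ) i j =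
        (((Qmat p (0 : ℤ) b₁ c₁ * (Qmat p (0 : ℤ) b₂ c₂)ᵀ) i j : ℤ) : R) := by
    intro b₁ c₁ b₂ c₂ i j
    rw [Matrix.mul_apply, Matrix.mul_apply, Int.cast_sum]
    refine Finset.sum_congr rfl fun m _ => ?_
    rw [Matrix.transpose_apply, Matrix.transpose_apply, Int.cast_mul, castQ, castQ]
  refine ⟨htr 1 0, htr 0 1, ?_, ?_, ?_, ?_⟩
  · ext i j
    have hc := prodcast 1 0 1 0 i j
    push_cast at hc
    rw [hc, entryQQ hp1 hp2 k hpk i j]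
    simp only [Matrix.add_apply, Matrix.smul_apply, smul_eq_mul, Qmat, Matrix.of_apply]
    split_ifs <;> push_cast
    · linear_combination (k : R) * h2
    · linear_combination -h2
    · ring
  · ext i j
    have hc := prodcast 1 0 0 1 i j
    push_cast at hc
    rw [hc, entryQN hp1 hp2 k hpk i j]
    simp only [Matrix.add_apply, Matrix.smul_apply, smul_eq_mul, Qmat, Matrix.of_apply]
    split_ifs <;> push_cast <;> ring
  · ext i j
    have hc := prodcast 0 1 1 0 i j
    push_cast at hc
    rw [hc, entryNQ hp1 hp2 k hpk i j]
    simp only [Matrix.add_apply, Matrix.smul_apply, smul_eq_mul, Qmat, Matrix.of_apply]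
    split_ifs <;> push_cast <;> ring
  · ext i j
    have hc := prodcast 0 1 0 1 i j
    push_cast at hc
    rw [hc, entryNN hp1 hp2 k hpk i j]
    simp only [Matrix.add_apply, Matrix.smul_apply, smul_eq_mul, Qmat, Matrix.of_apply]
    split_ifs <;> push_cast
    · linear_combination (k : R) * h2
    · ring
    · linear_combination -h2
end

section
/- Let R be a commutative ring of characteristic 2, p a positive integer, and Q_0, Q_1, Q_2, A_0, A_1, A_2 arbitrary p×p matrices over R. Let M be the 3p×6p block matrix with block rows (Q_0 Q_1 Q_2 | A_0 A_1 A_2), (Q_2 Q_0 Q_1 | A_2 A_0 A_1), (Q_1 Q_2 Q_0 | A_1 A_2 A_0), and let C be the code generated by the rows of M, i.e., the R-submodule of R^{6p} spanned by the rows of M. Then C is self-orthogonal (every two codewords of C have Euclidean inner product 0) if and only if Σ_{i=0}^{2} A_i A_i^T = Σ_{i=0}^{2} Q_i Q_i^T and Σ_{i=0}^{2} A_i A_{[i+2]_3}^T = Σ_{i=0}^{2} Q_i Q_{[i+2]_3}^T. -/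
open Matrix

/-- The `3×3` block circulant matrix `CIRC(B 0, B 1, B 2)` whose block rows are
`(B 0, B 1, B 2)`, `(B 2, B 0, B 1)`, `(B 1, B 2, B 0)`. -/
def blockCirc {R n : Type*} (B : ZMod 3 → Matrix n n R) :
    Matrix (ZMod 3 × n) (ZMod 3 × n) R :=
  Matrix.of fun ix jy => B (jy.1 - ix.1) ix.2 jy.2

/-- The `3p × 6p` block matrix with block rows `(Q 0, Q 1, Q 2 | A 0, A 1, A 2)`,
`(Q 2, Q 0, Q 1 | A 2, A 0, A 1)`, `(Q 1, Q 2, Q 0 | A 1, A 2, A 0)`. -/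
def Mblk {R n : Type*} (Q A : ZMod 3 → Matrix n n R) :
    Matrix (ZMod 3 × n) ((ZMod 3 × n) ⊕ (ZMod 3 × n)) R :=
  Matrix.fromCols (blockCirc Q) (blockCirc A)

/-!
A bilinear form vanishes on a span as soon as it vanishes on the generators, so `C` is
self-orthogonal iff the rows of `M` are pairwise orthogonal. The dot product of rows `(c, i)` and
`(c', j)` of `M` is the `(i, j)` entry of `G_Q(c - c') + G_A(c - c')`, where
`G_B(d) = ∑ₖ B k * (B (k + d))ᵀ` (`circGram B d` below). Since `G_B(1) = G_B(2)ᵀ`, only the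
shifts `d = 0, 2` give conditions, and in characteristic `2` the condition
`G_Q(d) + G_A(d) = 0` says `G_A(d) = G_Q(d)`.
-/

theorem Submodule.forall_mem_span_map₂_eq_zero_iff {R M N P : Type*} [CommSemiring R]
    [AddCommMonoid M] [AddCommMonoid N] [AddCommMonoid P] [Module R M] [Module R N] [Module R P]
    (f : M →ₗ[R] N →ₗ[R] P) (s : Set M) (t : Set N) :
    (∀ x ∈ span R s, ∀ y ∈ span R t, f x y = 0) ↔ ∀ x ∈ s, ∀ y ∈ t, f x y = 0 := by
  have h := map₂_le (f := f) (p := span R s) (q := span R t) (r := ⊥)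
  rw [map₂_span_span, span_le, Set.image2_subset_iff] at h
  simpa only [SetLike.mem_coe, mem_bot] using h.symm

theorem Matrix.forall_mem_span_rows_dotProduct_eq_zero_iff {R m n : Type*} [CommSemiring R]
    [Fintype n] (M : Matrix m n R) :
    (∀ x ∈ Submodule.span R (Set.range fun i => M i),
      ∀ y ∈ Submodule.span R (Set.range fun i => M i), x ⬝ᵥ y = 0) ↔
      ∀ i j, M i ⬝ᵥ M j = 0 := by
  refine (Submodule.forall_mem_span_map₂_eq_zero_iff (dotProductBilin R R) _ _).trans ?_
  simp only [Set.forall_mem_range, dotProductBilin_apply_apply]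

theorem Matrix.neg_eq_self_of_charTwo {R m n : Type*} [Ring R] [CharP R 2] (X : Matrix m n R) :
    -X = X := by
  ext i j
  exact CharTwo.neg_eq (X i j)

section BlockCirculant

variable {R n : Type*} [Fintype n]

def circGram [NonUnitalNonAssocSemiring R] (B : ZMod 3 → Matrix n n R) (d : ZMod 3) :
    Matrix n n R :=
  ∑ k : ZMod 3, B k * (B (k + d))ᵀ

theorem blockCirc_row_dotProduct [NonUnitalNonAssocSemiring R] (B : ZMod 3 → Matrix n n R)
    (ix jy : ZMod 3 × n) :
    blockCirc B ix ⬝ᵥ blockCirc B jy = circGram B (ix.1 - jy.1) ix.2 jy.2 := by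
  rw [dotProduct, Fintype.sum_prod_type, circGram, Matrix.sum_apply]
  refine Fintype.sum_equiv (Equiv.subRight ix.1) _ _ fun c => ?_
  simp only [blockCirc, of_apply, mul_apply, transpose_apply, Equiv.subRight_apply,
    sub_add_sub_cancel]

theorem Mblk_row_dotProduct [NonUnitalNonAssocSemiring R] (Q A : ZMod 3 → Matrix n n R)
    (ix jy : ZMod 3 × n) :
    Mblk Q A ix ⬝ᵥ Mblk Q A jy =
      (circGram Q (ix.1 - jy.1) + circGram A (ix.1 - jy.1)) ix.2 jy.2 := by
  rw [dotProduct, Fintype.sum_sum_type, Matrix.add_apply, ← blockCirc_row_dotProduct,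
    ← blockCirc_row_dotProduct]
  rfl

theorem circGram_transpose [CommSemiring R] (B : ZMod 3 → Matrix n n R) (d : ZMod 3) :
    (circGram B d)ᵀ = circGram B (-d) := by
  rw [circGram, circGram, transpose_sum]
  refine Fintype.sum_equiv (Equiv.addRight d) _ _ fun k => ?_
  rw [transpose_mul, transpose_transpose, Equiv.coe_addRight, add_neg_cancel_right]

theorem Mblk_rows_orthogonal_iff [NonUnitalNonAssocSemiring R] (Q A : ZMod 3 → Matrix n n R) :
    (∀ ix jy, Mblk Q A ix ⬝ᵥ Mblk Q A jy = 0) ↔ ∀ d, circGram Q d + circGram A d = 0 := by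
  simp only [Mblk_row_dotProduct]
  refine ⟨fun h d => ext fun i j => by simpa using h (d, i) (0, j), fun h ix jy => ?_⟩
  rw [h, Matrix.zero_apply]

theorem forall_circGram_add_eq_zero_iff [CommSemiring R] (Q A : ZMod 3 → Matrix n n R) :
    (∀ d, circGram Q d + circGram A d = 0) ↔
      circGram Q 0 + circGram A 0 = 0 ∧ circGram Q 2 + circGram A 2 = 0 := by
  refine ⟨fun h => ⟨h 0, h 2⟩, fun ⟨h0, h2⟩ d => ?_⟩
  have h1 : circGram Q 1 + circGram A 1 = 0 := by
    have h := congrArg transpose h2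
    rwa [transpose_add, circGram_transpose, circGram_transpose, transpose_zero] at h
  fin_cases d
  exacts [h0, h1, h2]

end BlockCirculant

theorem stmt5_general {R : Type*} [CommRing R] [CharP R 2] (p : ℕ)
    (Q A : ZMod 3 → Matrix (Fin p) (Fin p) R) :
    (∀ x ∈ Submodule.span R (Set.range fun i => Mblk Q A i),
      ∀ y ∈ Submodule.span R (Set.range fun i => Mblk Q A i),
        dotProduct x y = 0) ↔
      (∑ i : ZMod 3, A i * (A i)ᵀ = ∑ i : ZMod 3, Q i * (Q i)ᵀ ∧
        ∑ i : ZMod 3, A i * (A (i + 2))ᵀ = ∑ i : ZMod 3, Q i * (Q (i + 2))ᵀ) := by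
  rw [forall_mem_span_rows_dotProduct_eq_zero_iff, Mblk_rows_orthogonal_iff,
    forall_circGram_add_eq_zero_iff]
  simp only [add_eq_zero_iff_eq_neg, neg_eq_self_of_charTwo, circGram, add_zero]
  exact and_congr eq_comm eq_comm

theorem stmt5 {R : Type*} [CommRing R] [CharP R 2] (p : ℕ) (hp : 0 < p)
    (Q A : ZMod 3 → Matrix (Fin p) (Fin p) R) :
    (∀ x ∈ Submodule.span R (Set.range fun i => Mblk Q A i),
      ∀ y ∈ Submodule.span R (Set.range fun i => Mblk Q A i),
        dotProduct x y = 0) ↔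
      (∑ i : ZMod 3, A i * (A i)ᵀ = ∑ i : ZMod 3, Q i * (Q i)ᵀ ∧
        ∑ i : ZMod 3, A i * (A (i + 2))ᵀ = ∑ i : ZMod 3, Q i * (Q (i + 2))ᵀ) :=
  stmt5_general p Q A
end

section
/- Let p be an odd prime and R a commutative ring of characteristic 2. For i = 0,1,2 let Q_i be quadratic residue circulant matrices Q_p(a_i,b_i,c_i) and A_i be p×p circulant matrices over R, and let M be the 3p×6p block matrix with block rows (Q_0 Q_1 Q_2 | A_0 A_1 A_2), (Q_2 Q_0 Q_1 | A_2 A_0 A_1), (Q_1 Q_2 Q_0 | A_1 A_2 A_0). Then M has full rank — i.e., there exists a 6p×3p matrix N over R with M·N = I_{3p} — if and only if there exist p×p circulant matrices C_0, C_1, C_2, D_0, D_1, D_2 over R such that: (1) Σ_{i=0}^{2} (Q_i C_i + A_i D_i) = I_p, (2) Σ_{i=0}^{2} (Q_i C_{[i+2]_3} + A_i D_{[i+2]_3}) = 0_p, and (3) Σ_{i=0}^{2} (Q_i C_{[i+1]_3} + A_i D_{[i+1]_3}) = 0_p. -/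
open Matrix
open scoped Classical

/-
Both block columns of `M` commute with the translations of `ZMod 3 × ZMod p` (cyclic shift of
the block index together with a cyclic shift inside each block), since `Q_p(a,b,c)` and the `A i`
are circulant. Averaging a right inverse of `M` over this group of order `3p`, which is odd and
hence a unit in characteristic `2`, yields a translation-invariant right inverse; such a matrix
is a column of two block circulants with circulant blocks `C`, `D`. For it, `M * N` is again
block circulant, with the three sums of conditions (1)–(3) as its blocks.
-/

namespace Matrix

variable {G m n n₁ n₂ R : Type*}

def IsVAddInvariant (G : Type*) [VAdd G m] [VAdd G n] (M : Matrix m n R) : Prop :=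
  ∀ (g : G) i j, M (g +ᵥ i) (g +ᵥ j) = M i j

theorem IsVAddInvariant.fromCols [VAdd G m] [VAdd G n₁] [VAdd G n₂]
    {M₁ : Matrix m n₁ R} {M₂ : Matrix m n₂ R} (h₁ : M₁.IsVAddInvariant G)
    (h₂ : M₂.IsVAddInvariant G) : (fromCols M₁ M₂).IsVAddInvariant G := by
  rintro g i (j | j)
  exacts [h₁ g i j, h₂ g i j]

theorem IsVAddInvariant.toRows₁ [VAdd G n₁] [VAdd G n₂] [VAdd G m]
    {M : Matrix (n₁ ⊕ n₂) m R} (h : M.IsVAddInvariant G) : M.toRows₁.IsVAddInvariant G :=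
  fun g i j => h g (.inl i) j

theorem IsVAddInvariant.toRows₂ [VAdd G n₁] [VAdd G n₂] [VAdd G m]
    {M : Matrix (n₁ ⊕ n₂) m R} (h : M.IsVAddInvariant G) : M.toRows₂.IsVAddInvariant G :=
  fun g i j => h g (.inr i) j

theorem circulant_isVAddInvariant [AddCommGroup n] (v : n → R) :
    (circulant v).IsVAddInvariant n := by
  intro g i j
  simp only [circulant_apply, vadd_eq_add, add_sub_add_left_eq_sub]

theorem exists_isVAddInvariant_mul_eq_one [AddGroup G] [Fintype G]
    [AddAction G m] [AddAction G n] [Fintype n] [DecidableEq m] [CommSemiring R]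
    {M : Matrix m n R} (hM : M.IsVAddInvariant G)
    (hG : IsUnit (Fintype.card G : R)) {N : Matrix n m R} (hN : M * N = 1) :
    ∃ N' : Matrix n m R, M * N' = 1 ∧ N'.IsVAddInvariant G := by
  obtain ⟨c, hc⟩ := hG
  let shift (g : G) : Matrix n m R := N.submatrix (g +ᵥ ·) (g +ᵥ ·)
  have hshift (g : G) : M * shift g = 1 := by
    calc M * shift g
        = M.submatrix (AddAction.toPerm g) (AddAction.toPerm g) *
            N.submatrix (AddAction.toPerm g) (AddAction.toPerm g) := by
          congr 1; ext i k; exact (hM g i k).symm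
      _ = 1 := by rw [submatrix_mul_equiv, hN, submatrix_one_equiv]
  refine ⟨(↑c⁻¹ : R) • ∑ g, shift g, ?_, fun h k j => ?_⟩
  · rw [Matrix.mul_smul, Matrix.mul_sum, Finset.sum_congr rfl fun g _ => hshift g,
      Finset.sum_const, Finset.card_univ, ← Nat.cast_smul_eq_nsmul R, smul_smul, ← hc,
      Units.inv_mul, one_smul]
  · simp only [smul_apply, sum_apply, shift, submatrix_apply, vadd_vadd]
    congr 1
    exact Fintype.sum_equiv (Equiv.addRight h) _ _ fun g => rfl

end Matrix

theorem Qmat_isVAddInvariant (p : ℕ) {R : Type*} [CommRing R] (a b c : R) :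
    (Qmat p a b c).IsVAddInvariant (ZMod p) := by
  intro g i j
  simp only [Qmat, of_apply, vadd_eq_add, add_sub_add_left_eq_sub, add_right_inj]

section blockCirc

variable {R K n : Type*}

theorem blockCirc_injective : Function.Injective (blockCirc : (ZMod 3 → Matrix n n R) → _) := by
  intro B C h
  ext d x y
  simpa [blockCirc] using congrFun₂ h (0, x) (d, y)

theorem blockCirc_add [Add R] (B C : ZMod 3 → Matrix n n R) :
    blockCirc B + blockCirc C = blockCirc (B + C) :=
  rfl

theorem blockCirc_mul [Fintype n] [NonUnitalNonAssocSemiring R] (B C : ZMod 3 → Matrix n n R) :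
    blockCirc B * blockCirc C = blockCirc fun d => ∑ i, B i * C (d - i) := by
  ext ⟨i₁, i₂⟩ ⟨j₁, j₂⟩
  simp only [blockCirc, of_apply, mul_apply, Fintype.sum_prod_type, Matrix.sum_apply]
  refine (Fintype.sum_equiv (Equiv.addLeft i₁) _ _ fun k => ?_).symm
  simp only [Equiv.coe_addLeft, add_sub_cancel_left, sub_add_eq_sub_sub]

theorem blockCirc_single_one [DecidableEq n] [Zero R] [One R] :
    blockCirc (Pi.single 0 (1 : Matrix n n R)) = 1 := by
  ext ⟨i₁, i₂⟩ ⟨j₁, j₂⟩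
  simp only [blockCirc, of_apply, one_apply, Prod.ext_iff, Pi.single_apply, sub_eq_zero,
    eq_comm (a := j₁)]
  split_ifs <;> simp_all [one_apply]

theorem blockCirc_eq_one_iff [DecidableEq n] [Zero R] [One R] {B : ZMod 3 → Matrix n n R} :
    blockCirc B = 1 ↔ B 0 = 1 ∧ B 1 = 0 ∧ B 2 = 0 := by
  rw [← blockCirc_single_one, blockCirc_injective.eq_iff, funext_iff]
  constructor
  · intro h
    exact ⟨h 0, h 1, h 2⟩
  · rintro ⟨h₀, h₁, h₂⟩ d
    fin_cases d <;> simpa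

theorem blockCirc_isVAddInvariant [AddCommGroup K] {B : ZMod 3 → Matrix K K R}
    (hB : ∀ d, (B d).IsVAddInvariant K) : (blockCirc B).IsVAddInvariant (ZMod 3 × K) := by
  rintro ⟨g₁, g₂⟩ ⟨i₁, i₂⟩ ⟨j₁, j₂⟩
  simp only [blockCirc, of_apply, vadd_eq_add, Prod.mk_add_mk, add_sub_add_left_eq_sub]
  exact hB _ g₂ i₂ j₂

theorem Matrix.IsVAddInvariant.exists_eq_blockCirc_circulant [AddCommGroup K]
    {N : Matrix (ZMod 3 × K) (ZMod 3 × K) R} (hN : N.IsVAddInvariant (ZMod 3 × K)) :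
    ∃ C : ZMod 3 → K → R, N = blockCirc fun d => circulant (C (-d)) := by
  refine ⟨fun d t => N (0, t) (-d, 0), ?_⟩
  ext ⟨i₁, i₂⟩ ⟨j₁, j₂⟩
  simpa [blockCirc, circulant_apply] using hN (i₁, j₂) (0, i₂ - j₂) (j₁ - i₁, 0)

end blockCirc

theorem Mblk_mul_fromRows_eq_one_iff {R n : Type*} [Semiring R] [Fintype n] [DecidableEq n]
    (Q A C D : ZMod 3 → Matrix n n R) :
    Mblk Q A * fromRows (blockCirc fun d => C (-d)) (blockCirc fun d => D (-d)) = 1 ↔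
      ∑ i, (Q i * C i + A i * D i) = 1 ∧
      ∑ i, (Q i * C (i + 2) + A i * D (i + 2)) = 0 ∧
      ∑ i, (Q i * C (i + 1) + A i * D (i + 1)) = 0 := by
  have h₁ : ∀ i : ZMod 3, -(1 - i) = i + 2 := by decide
  have h₂ : ∀ i : ZMod 3, -(2 - i) = i + 1 := by decide
  rw [Mblk, fromCols_mul_fromRows, blockCirc_mul, blockCirc_mul, blockCirc_add,
    blockCirc_eq_one_iff]
  simp only [Pi.add_apply, ← Finset.sum_add_distrib, zero_sub, neg_neg, h₁, h₂]

theorem stmt8 {R : Type*} [CommRing R] [CharP R 2] (p : ℕ) [Fact (Nat.Prime p)]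
    (hodd : Odd p) (a b c : ZMod 3 → R)
    (A : ZMod 3 → Matrix (ZMod p) (ZMod p) R)
    (hA : ∀ i, ∃ v : ZMod p → R, A i = Matrix.circulant v) :
    (∃ N : Matrix ((ZMod 3 × ZMod p) ⊕ (ZMod 3 × ZMod p)) (ZMod 3 × ZMod p) R,
        Mblk (fun i => Qmat p (a i) (b i) (c i)) A * N = 1) ↔
      (∃ u w : ZMod 3 → ZMod p → R,
        ∑ i : ZMod 3, (Qmat p (a i) (b i) (c i) * Matrix.circulant (u i) +
          A i * Matrix.circulant (w i)) = (1 : Matrix (ZMod p) (ZMod p) R) ∧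
        ∑ i : ZMod 3, (Qmat p (a i) (b i) (c i) * Matrix.circulant (u (i + 2)) +
          A i * Matrix.circulant (w (i + 2))) = (0 : Matrix (ZMod p) (ZMod p) R) ∧
        ∑ i : ZMod 3, (Qmat p (a i) (b i) (c i) * Matrix.circulant (u (i + 1)) +
          A i * Matrix.circulant (w (i + 1))) = (0 : Matrix (ZMod p) (ZMod p) R)) := by
  set Q := fun i => Qmat p (a i) (b i) (c i)
  constructor
  · rintro ⟨N, hN⟩
    have hM : (Mblk Q A).IsVAddInvariant (ZMod 3 × ZMod p) := by
      refine .fromCols (blockCirc_isVAddInvariant fun d => Qmat_isVAddInvariant p _ _ _)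
        (blockCirc_isVAddInvariant fun d => ?_)
      obtain ⟨v, hv⟩ := hA d
      exact hv ▸ circulant_isVAddInvariant v
    have hcard : IsUnit (Fintype.card (ZMod 3 × ZMod p) : R) := by
      rw [Fintype.card_prod, ZMod.card, ZMod.card,
        natCast_eq_one_of_odd_of_two_eq_zero ((by decide : Odd 3).mul hodd) CharTwo.two_eq_zero]
      exact isUnit_one
    obtain ⟨N', hN', hinv⟩ := exists_isVAddInvariant_mul_eq_one hM hcard hN
    obtain ⟨u, hu⟩ := hinv.toRows₁.exists_eq_blockCirc_circulant
    obtain ⟨w, hw⟩ := hinv.toRows₂.exists_eq_blockCirc_circulant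
    rw [← fromRows_toRows N', hu, hw] at hN'
    exact ⟨u, w, (Mblk_mul_fromRows_eq_one_iff Q A _ _).1 hN'⟩
  · rintro ⟨u, w, h⟩
    exact ⟨_, (Mblk_mul_fromRows_eq_one_iff Q A (circulant ∘ u) (circulant ∘ w)).2 h⟩
end

section
/- Let p be an odd prime and R a commutative ring of characteristic 2. For i = 0,1,2 let Q_i = Q_p(a_i,b_i,c_i) and let A_i be p×p circulant matrices over R, and let M be the 3p×6p block matrix with block rows (Q_0 Q_1 Q_2 | A_0 A_1 A_2), (Q_2 Q_0 Q_1 | A_2 A_0 A_1), (Q_1 Q_2 Q_0 | A_1 A_2 A_0). Suppose the code generated by M is self-dual, in the sense that M·M^T = 0 and there exists a 6p×3p matrix N over R with M·N = I_{3p}. Then there exist p×p matrices B and B' over R such that (Σ_{i=0}^{2} Q_i)·B + (Σ_{i=0}^{2} Q_i)^T·B' = I_p. -/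
open Matrix
open scoped Classical

/-!
Summing the three block rows of `M` and keeping only the first block column folds `M * N = 1`
and `M * Mᵀ = 0` into `S * B + T * C = 1` and `S * Sᵀ + T * Tᵀ = 0` for the circulants
`S = ∑ Q i` and `T = ∑ A i`. The matrices `B`, `C` may be replaced by circulants, and circulants
commute, so `Tᵀ = Tᵀ * (S * B + T * C) = S * (Tᵀ * B - Sᵀ * C)`. Transposing, `T` is a multiple
of `Sᵀ`, hence `1 = S * B + T * C` lies in `S * _ + Sᵀ * _`.
-/

namespace Matrix

variable {α n : Type*}

def IsCirculant [Sub n] (M : Matrix n n α) : Prop :=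
  ∃ v : n → α, M = circulant v

theorem IsCirculant.transpose [SubtractionMonoid n] {M : Matrix n n α} (hM : M.IsCirculant) :
    Mᵀ.IsCirculant := by
  obtain ⟨v, rfl⟩ := hM
  exact ⟨_, transpose_circulant v⟩

theorem IsCirculant.sub [Sub α] [Sub n] {M N : Matrix n n α} (hM : M.IsCirculant)
    (hN : N.IsCirculant) : (M - N).IsCirculant := by
  obtain ⟨v, rfl⟩ := hM
  obtain ⟨w, rfl⟩ := hN
  exact ⟨_, (circulant_sub v w).symm⟩

theorem isCirculant_sum [AddCommMonoid α] [Sub n] {ι : Type*} [Fintype ι]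
    {M : ι → Matrix n n α} (hM : ∀ i, (M i).IsCirculant) : (∑ i, M i).IsCirculant := by
  choose v hv using hM
  refine ⟨∑ i, v i, ?_⟩
  ext j k
  simp [hv, circulant_apply, sum_apply]

theorem IsCirculant.mul [NonUnitalNonAssocSemiring α] [Fintype n] [AddGroup n]
    {M N : Matrix n n α} (hM : M.IsCirculant) (hN : N.IsCirculant) : (M * N).IsCirculant := by
  obtain ⟨v, rfl⟩ := hM
  obtain ⟨w, rfl⟩ := hN
  exact ⟨_, circulant_mul v w⟩

theorem IsCirculant.commute [CommSemiring α] [Fintype n] [AddCommGroup n] {M N : Matrix n n α}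
    (hM : M.IsCirculant) (hN : N.IsCirculant) : Commute M N := by
  obtain ⟨v, rfl⟩ := hM
  obtain ⟨w, rfl⟩ := hN
  exact circulant_mul_comm v w

/-- A circulant matrix is determined by its column `0`, so it suffices to keep the column `0`
of `B` and `C`. -/
theorem IsCirculant.exists_isCirculant_mul_add_mul_eq_one [Semiring α] [Fintype n] [AddGroup n]
    [DecidableEq n] {S T B C : Matrix n n α} (hS : S.IsCirculant) (hT : T.IsCirculant)
    (h : S * B + T * C = 1) :
    ∃ B' C' : Matrix n n α, B'.IsCirculant ∧ C'.IsCirculant ∧ S * B' + T * C' = 1 := by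
  obtain ⟨s, rfl⟩ := hS
  obtain ⟨t, rfl⟩ := hT
  refine ⟨circulant fun i => B i 0, circulant fun i => C i 0, ⟨_, rfl⟩, ⟨_, rfl⟩, ?_⟩
  rw [circulant_mul, circulant_mul, ← circulant_add, ← circulant_single_one]
  congr 1
  funext i
  simpa [mulVec, dotProduct, mul_apply, one_apply, Pi.single_apply] using congrFun (congrFun h i) 0

theorem IsCirculant.exists_mul_add_transpose_mul_eq_one {R : Type*} [CommRing R] [Fintype n]
    [AddCommGroup n] [DecidableEq n] {S T B C : Matrix n n R} (hS : S.IsCirculant)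
    (hT : T.IsCirculant) (horth : S * Sᵀ + T * Tᵀ = 0) (h : S * B + T * C = 1) :
    ∃ X Y : Matrix n n R, S * X + Sᵀ * Y = 1 := by
  obtain ⟨β, γ, hβ, hγ, hβγ⟩ := hS.exists_isCirculant_mul_add_mul_eq_one hT h
  set Z := Tᵀ * β - Sᵀ * γ
  have hZ : Z.IsCirculant := (hT.transpose.mul hβ).sub (hS.transpose.mul hγ)
  have hTt : Tᵀ = S * Z := calc
    Tᵀ = Tᵀ * (S * β + T * γ) := by rw [hβγ, mul_one]
    _ = S * (Tᵀ * β) + T * Tᵀ * γ := by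
      rw [mul_add, ← mul_assoc, ← mul_assoc, (hT.transpose.commute hS).eq,
        (hT.transpose.commute hT).eq, mul_assoc]
    _ = S * Z := by
      rw [eq_neg_of_add_eq_zero_right horth, neg_mul, mul_assoc, ← sub_eq_add_neg, ← mul_sub]
  have hT' : T = Sᵀ * Zᵀ := calc
    T = (S * Z)ᵀ := by rw [← hTt, transpose_transpose]
    _ = Sᵀ * Zᵀ := by rw [transpose_mul, (hZ.transpose.commute hS.transpose).eq]
  exact ⟨β, Zᵀ * γ, by rw [← mul_assoc, ← hT', hβγ]⟩

end Matrix

section BlockCirc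

variable {R n : Type*} [CommSemiring R] [Fintype n]

theorem Mblk_mul_transpose (Q A : ZMod 3 → Matrix n n R) :
    Mblk Q A * (Mblk Q A)ᵀ = blockCirc Q * (blockCirc Q)ᵀ + blockCirc A * (blockCirc A)ᵀ := by
  rw [Mblk, transpose_fromCols, fromCols_mul_fromRows]

theorem Mblk_mul {m : Type*} (Q A : ZMod 3 → Matrix n n R)
    (N : Matrix ((ZMod 3 × n) ⊕ (ZMod 3 × n)) m R) :
    Mblk Q A * N = blockCirc Q * N.toRows₁ + blockCirc A * N.toRows₂ := by
  rw [Mblk, ← fromCols_mul_fromRows, fromRows_toRows]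

variable [DecidableEq n]

variable (R n) in
def sumBlocks : Matrix n (ZMod 3 × n) R :=
  of fun x iy => if x = iy.2 then 1 else 0

variable (R n) in
/-- Folding on the right with `(sumBlocks R n)ᵀ` instead would introduce a factor `3`. -/
def blockZeroIncl : Matrix (ZMod 3 × n) n R :=
  of fun iy x => if iy = (0, x) then 1 else 0

theorem sumBlocks_mul_blockZeroIncl : sumBlocks R n * blockZeroIncl R n = 1 := by
  ext x y
  simp [sumBlocks, blockZeroIncl, mul_apply, one_apply]

theorem sumBlocks_mul_blockCirc (G : ZMod 3 → Matrix n n R) :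
    sumBlocks R n * blockCirc G = (∑ i, G i) * sumBlocks R n := by
  ext x ⟨j, y⟩
  simp only [sumBlocks, blockCirc, mul_apply, of_apply, ite_mul, one_mul, zero_mul,
    Fintype.sum_prod_type, Finset.sum_ite_eq, Finset.mem_univ, ↓reduceIte, Matrix.sum_apply,
    mul_ite, mul_one, mul_zero, Finset.sum_ite_eq']
  exact Fintype.sum_equiv (Equiv.subLeft j) _ _ fun _ => rfl

theorem blockCirc_mul_transpose_sumBlocks (G : ZMod 3 → Matrix n n R) :
    blockCirc G * (sumBlocks R n)ᵀ = (sumBlocks R n)ᵀ * ∑ i, G i := by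
  ext ⟨i, x⟩ y
  simp only [blockCirc, sumBlocks, mul_apply, of_apply, transpose_apply, mul_ite, mul_one,
    mul_zero, Fintype.sum_prod_type, Finset.sum_ite_eq, Finset.mem_univ, ↓reduceIte,
    Matrix.sum_apply, ite_mul, one_mul, zero_mul, Finset.sum_ite_eq']
  exact Fintype.sum_equiv (Equiv.subRight i) _ _ fun _ => rfl

theorem sumBlocks_mul_blockCirc_mul_transpose_mul_blockZeroIncl (G : ZMod 3 → Matrix n n R) :
    sumBlocks R n * (blockCirc G * (blockCirc G)ᵀ) * blockZeroIncl R n =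
      (∑ i, G i) * (∑ i, G i)ᵀ := calc
  _ = (∑ i, G i) * (blockCirc G * (sumBlocks R n)ᵀ)ᵀ * blockZeroIncl R n := by
    rw [← Matrix.mul_assoc, sumBlocks_mul_blockCirc, transpose_mul, transpose_transpose,
      Matrix.mul_assoc (∑ i, G i)]
  _ = (∑ i, G i) * (∑ i, G i)ᵀ * (sumBlocks R n * blockZeroIncl R n) := by
    rw [blockCirc_mul_transpose_sumBlocks, transpose_mul, transpose_transpose]
    simp only [Matrix.mul_assoc]
  _ = (∑ i, G i) * (∑ i, G i)ᵀ := by rw [sumBlocks_mul_blockZeroIncl, Matrix.mul_one]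

theorem sum_mul_transpose_add_sum_mul_transpose_eq_zero {Q A : ZMod 3 → Matrix n n R}
    (h : Mblk Q A * (Mblk Q A)ᵀ = 0) :
    (∑ i, Q i) * (∑ i, Q i)ᵀ + (∑ i, A i) * (∑ i, A i)ᵀ = 0 := by
  have := congrArg (fun X => sumBlocks R n * X * blockZeroIncl R n) h
  simpa only [Mblk_mul_transpose, Matrix.mul_add, Matrix.add_mul, Matrix.mul_zero,
    Matrix.zero_mul, sumBlocks_mul_blockCirc_mul_transpose_mul_blockZeroIncl] using this

theorem exists_sum_mul_add_sum_mul_eq_one {Q A : ZMod 3 → Matrix n n R}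
    {N : Matrix ((ZMod 3 × n) ⊕ (ZMod 3 × n)) (ZMod 3 × n) R} (h : Mblk Q A * N = 1) :
    ∃ B C : Matrix n n R, (∑ i, Q i) * B + (∑ i, A i) * C = 1 := by
  refine ⟨sumBlocks R n * N.toRows₁ * blockZeroIncl R n,
    sumBlocks R n * N.toRows₂ * blockZeroIncl R n, ?_⟩
  have := congrArg (fun X => sumBlocks R n * X * blockZeroIncl R n) h
  simpa only [Mblk_mul, Matrix.mul_add, Matrix.add_mul, ← Matrix.mul_assoc,
    sumBlocks_mul_blockCirc, Matrix.mul_one, sumBlocks_mul_blockZeroIncl] using this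

end BlockCirc

theorem Qmat_isCirculant (p : ℕ) {R : Type*} [CommRing R] (a b c : R) :
    (Qmat p a b c).IsCirculant := by
  refine ⟨fun d => if d = 0 then a else if IsSquare (-d) then b else c, ?_⟩
  ext i j
  rcases eq_or_ne i j with rfl | h
  · simp [Qmat, circulant_apply]
  · simp [Qmat, circulant_apply, h, sub_eq_zero]

theorem stmt9_general {R : Type*} [CommRing R] (p : ℕ) [Fact (Nat.Prime p)]
    (a b c : ZMod 3 → R)
    (A : ZMod 3 → Matrix (ZMod p) (ZMod p) R)
    (hA : ∀ i, ∃ v : ZMod p → R, A i = Matrix.circulant v)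
    (hself : Mblk (fun i => Qmat p (a i) (b i) (c i)) A *
      (Mblk (fun i => Qmat p (a i) (b i) (c i)) A)ᵀ = 0)
    (hfull : ∃ N : Matrix ((ZMod 3 × ZMod p) ⊕ (ZMod 3 × ZMod p)) (ZMod 3 × ZMod p) R,
      Mblk (fun i => Qmat p (a i) (b i) (c i)) A * N = 1) :
    ∃ B B' : Matrix (ZMod p) (ZMod p) R,
      (∑ i : ZMod 3, Qmat p (a i) (b i) (c i)) * B +
        (∑ i : ZMod 3, Qmat p (a i) (b i) (c i))ᵀ * B' = 1 := by
  obtain ⟨N, hN⟩ := hfull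
  obtain ⟨B, C, hBC⟩ := exists_sum_mul_add_sum_mul_eq_one hN
  exact (isCirculant_sum fun i => Qmat_isCirculant p _ _ _).exists_mul_add_transpose_mul_eq_one
    (isCirculant_sum hA) (sum_mul_transpose_add_sum_mul_transpose_eq_zero hself) hBC

theorem stmt9 {R : Type*} [CommRing R] [CharP R 2] (p : ℕ) [Fact (Nat.Prime p)]
    (hodd : Odd p) (a b c : ZMod 3 → R)
    (A : ZMod 3 → Matrix (ZMod p) (ZMod p) R)
    (hA : ∀ i, ∃ v : ZMod p → R, A i = Matrix.circulant v)
    (hself : Mblk (fun i => Qmat p (a i) (b i) (c i)) A *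
      (Mblk (fun i => Qmat p (a i) (b i) (c i)) A)ᵀ = 0)
    (hfull : ∃ N : Matrix ((ZMod 3 × ZMod p) ⊕ (ZMod 3 × ZMod p)) (ZMod 3 × ZMod p) R,
      Mblk (fun i => Qmat p (a i) (b i) (c i)) A * N = 1) :
    ∃ B B' : Matrix (ZMod p) (ZMod p) R,
      (∑ i : ZMod 3, Qmat p (a i) (b i) (c i)) * B +
        (∑ i : ZMod 3, Qmat p (a i) (b i) (c i))ᵀ * B' = 1 :=
  stmt9_general p a b c A hA hself hfull
end

section
/- Let p = 4k+1 be a prime and R a commutative ring of characteristic 2. For i = 0,1,2 let a_i, b_i, c_i ∈ R and set Q_i = Q_p(a_i,b_i,c_i). Then Σ_{i=0}^{2} Q_i Q_i^T = Q_p( Σ_{i=0}^{2} a_i^2 , Σ_{i=0}^{2} (b_i^2 + k(b_i^2 + c_i^2)) , Σ_{i=0}^{2} (c_i^2 + k(b_i^2 + c_i^2)) ). -/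
open Matrix
open scoped Classical

/-! In characteristic 2 the entry `∑ₓ F x F (x - d)` of `Q Qᵀ`, where `F` is the first row of `Q`,
collapses under the involution `x ↦ d - x` (which preserves the summand because `F` is even,
`-1` being a square mod `p`) to its unique fixed point: it equals `F (d / 2) ^ 2`. Whether `d / 2`
is a square differs from whether `d` is one exactly when `2` is a non-square mod `p = 4k + 1`,
i.e. when `k` is odd, which is what the coefficient `k (b² + c²)` records. -/

theorem Finset.sum_eq_of_involutive_of_charTwo {ι R : Type*} [Fintype ι] [Ring R] [CharP R 2]
    {σ : ι → ι} (hσ : σ.Involutive) {f : ι → R} (hf : ∀ x, f (σ x) = f x) {x₀ : ι}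
    (hfix : ∀ x, σ x = x ↔ x = x₀) : ∑ x, f x = f x₀ := by
  classical
  rw [← Finset.add_sum_erase _ _ (Finset.mem_univ x₀), add_eq_left]
  refine Finset.sum_involution (fun x _ => σ x) (fun x _ => by rw [hf, CharTwo.add_self_eq_zero])
    (fun x hx _ hfx => Finset.ne_of_mem_erase hx ((hfix x).1 hfx)) (fun x hx => ?_)
    (fun x _ => hσ x)
  refine Finset.mem_erase.2 ⟨fun h => Finset.ne_of_mem_erase hx ?_, Finset.mem_univ _⟩
  rw [← hσ x, h, (hfix x₀).2 rfl]

theorem FiniteField.isSquare_mul_iff {F : Type*} [Field F] [Fintype F] {x y : F}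
    (hx : x ≠ 0) (hy : y ≠ 0) : IsSquare (x * y) ↔ (IsSquare x ↔ IsSquare y) := by
  rw [← quadraticChar_one_iff_isSquare (mul_ne_zero hx hy), ← quadraticChar_one_iff_isSquare hx,
    ← quadraticChar_one_iff_isSquare hy, map_mul]
  rcases quadraticChar_dichotomy hx with h | h <;>
    rcases quadraticChar_dichotomy hy with h' | h' <;> simp [h, h']

theorem ZMod.isSquare_two_iff_even {p k : ℕ} [Fact p.Prime] (hpk : p = 4 * k + 1) :
    IsSquare (2 : ZMod p) ↔ Even k := by
  rw [ZMod.exists_sq_eq_two_iff (by omega), Nat.even_iff]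
  omega

section QuadraticResidueCirculant

variable {p : ℕ} {R : Type*}

noncomputable def qrRow (a b c : R) (x : ZMod p) : R :=
  if x = 0 then a else if IsSquare x then b else c

theorem qrRow_neg (h : IsSquare (-1 : ZMod p)) (a b c : R) (x : ZMod p) :
    qrRow a b c (-x) = qrRow a b c x := by
  have hsq : IsSquare (-x) ↔ IsSquare x :=
    ⟨fun hx => by simpa using h.mul hx, fun hx => by simpa using h.mul hx⟩
  simp only [qrRow, neg_eq_zero, hsq]

variable [CommRing R]

theorem Qmat_apply (a b c : R) (i j : ZMod p) : Qmat p a b c i j = qrRow a b c (j - i) := by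
  simp only [Qmat, qrRow, Matrix.of_apply, sub_eq_zero, eq_comm]

theorem Qmat_sum {ι : Type*} (s : Finset ι) (a b c : ι → R) :
    ∑ i ∈ s, Qmat p (a i) (b i) (c i) = Qmat p (∑ i ∈ s, a i) (∑ i ∈ s, b i) (∑ i ∈ s, c i) := by
  ext i j
  simp only [Matrix.sum_apply, Qmat_apply, qrRow]
  split_ifs <;> rfl

theorem Qmat_mul_transpose_apply [NeZero p] (a b c : R) (i j : ZMod p) :
    (Qmat p a b c * (Qmat p a b c)ᵀ) i j = ∑ x, qrRow a b c x * qrRow a b c (x - (j - i)) := by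
  simp only [Matrix.mul_apply, Matrix.transpose_apply, Qmat_apply]
  exact Fintype.sum_equiv (Equiv.subRight i) _ _ fun l => by
    rw [Equiv.subRight_apply, sub_sub_sub_cancel_right]

variable [CharP R 2]

theorem Qmat_mul_transpose_apply_of_charTwo [Fact p.Prime] (h2 : (2 : ZMod p) ≠ 0)
    (h : IsSquare (-1 : ZMod p)) (a b c : R) (i j : ZMod p) :
    (Qmat p a b c * (Qmat p a b c)ᵀ) i j = qrRow a b c ((j - i) / 2) ^ 2 := by
  rw [Qmat_mul_transpose_apply]
  set d := j - i
  have hfix (x : ZMod p) : d - x = x ↔ x = d / 2 := by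
    rw [eq_div_iff h2]
    constructor <;> intro hx <;> linear_combination -hx
  rw [Finset.sum_eq_of_involutive_of_charTwo (σ := (d - ·)) (sub_sub_cancel d) (fun x => ?_) hfix,
    show d / 2 - d = -(d / 2) by field_simp; ring, qrRow_neg h, sq]
  rw [show d - x = -(x - d) by ring, show -(x - d) - d = -x by ring, qrRow_neg h, qrRow_neg h,
    mul_comm]

theorem Qmat_mul_transpose_self {k : ℕ} [Fact p.Prime] (hpk : p = 4 * k + 1) (a b c : R) :
    Qmat p a b c * (Qmat p a b c)ᵀ =
      Qmat p (a ^ 2) (b ^ 2 + k * (b ^ 2 + c ^ 2)) (c ^ 2 + k * (b ^ 2 + c ^ 2)) := by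
  have h2 : (2 : ZMod p) ≠ 0 := Ring.two_ne_zero (by rw [ZMod.ringChar_zmod_n]; omega)
  have hneg : IsSquare (-1 : ZMod p) := ZMod.exists_sq_eq_neg_one_iff.2 (by omega)
  ext i j
  rw [Qmat_mul_transpose_apply_of_charTwo h2 hneg, Qmat_apply]
  set d := j - i
  rcases eq_or_ne d 0 with hd | hd
  · simp [qrRow, hd]
  have hsq : IsSquare (d / 2) ↔ (IsSquare d ↔ Even k) := by
    rw [div_eq_mul_inv, FiniteField.isSquare_mul_iff hd (inv_ne_zero h2), isSquare_inv,
      ZMod.isSquare_two_iff_even hpk]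
  by_cases hk : Even k <;> by_cases hsd : IsSquare d <;>
    simp [qrRow, hd, h2, hsq, hk, hsd, CharTwo.natCast_eq_ite, CharTwo.add_cancel_left,
      add_left_comm _ (b ^ 2), CharTwo.add_self_eq_zero]

end QuadraticResidueCirculant

theorem stmt16 {R : Type*} [CommRing R] [CharP R 2] (p k : ℕ) [Fact (Nat.Prime p)]
    (hpk : p = 4 * k + 1) (a b c : ZMod 3 → R) :
    ∑ i : ZMod 3, Qmat p (a i) (b i) (c i) * (Qmat p (a i) (b i) (c i))ᵀ =
      Qmat p (∑ i : ZMod 3, (a i) ^ 2)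
        (∑ i : ZMod 3, ((b i) ^ 2 + (k : R) * ((b i) ^ 2 + (c i) ^ 2)))
        (∑ i : ZMod 3, ((c i) ^ 2 + (k : R) * ((b i) ^ 2 + (c i) ^ 2))) := by
  simp only [Qmat_mul_transpose_self hpk, Qmat_sum]
end
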